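/- arXiv:1507.04800 — 2 statements merged into one kernel-verified Lean document; each statement's English description precedes it below -/
import Mathlib

section
/- Let A ⊆ V(G) and B ⊆ V(H) be nonempty. Then removing the vertex set A × B from G □ H yields an isometric subgraph of G □ H if and only if G − A is an isometric subgraph of G and H − B is an isometric subgraph of H. -/
open SimpleGraph

variable {α β : Type*}

/-- The lexicographic product `G[H]`. -/
def lexProd (G : SimpleGraph α) (H : SimpleGraph β) : SimpleGraph (α × β) where
  Adj p q := G.Adj p.1 q.1 ∨ (p.1 = q.1 ∧ H.Adj p.2 q.2)
  symm := by
    constructor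
    rintro ⟨u, x⟩ ⟨v, y⟩ (h | ⟨h1, h2⟩)
    · exact Or.inl h.symm
    · exact Or.inr ⟨h1.symm, h2.symm⟩
  loopless := by
    constructor
    rintro ⟨u, x⟩ (h | ⟨-, h⟩)
    · exact G.irrefl h
    · exact H.irrefl h

/-- The induced subgraph on `S` is an isometric subgraph of `G`. -/
def IsometricSet (G : SimpleGraph α) (S : Set α) : Prop :=
  ∀ a b : S, (G.induce S).edist a b = G.edist a.1 b.1

/-- The set of orders of isometric (induced) subgraphs of `G`. -/
def dpSet (G : SimpleGraph α) : Set ℕ :=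
  {k | ∃ S : Finset α, S.card = k ∧ IsometricSet G ↑S}

/-- `G` is distance preserving. -/
def IsDP [Fintype α] (G : SimpleGraph α) : Prop :=
  G.Connected ∧ ∀ i : ℕ, 1 ≤ i → i ≤ Fintype.card α → i ∈ dpSet G

/-- `l` is an sdp sequence for `G`. -/
def IsSdpList [Fintype α] (G : SimpleGraph α) (l : List α) : Prop :=
  l.Nodup ∧ (∀ v : α, v ∈ l) ∧
    ∀ s : ℕ, IsometricSet G {v : α | v ∉ l.take s}

/-- `G` is sequentially distance preserving. -/
def IsSDP [Fintype α] (G : SimpleGraph α) : Prop :=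
  G.Connected ∧ ∃ l : List α, IsSdpList G l

/-!
Distances add in a box product: `d((u, x), (v, y)) = d_G(u, v) + d_H(x, y)`. Hence a geodesic of
`G □ H` between two vertices of a row `G × {y}` never leaves that row; for `y ∈ B`, a geodesic
avoiding `A × B` is therefore a geodesic of `G − A`, and swapping the factors handles `H − B`.
Conversely, from `(u, x)` with `u ∉ A` walk along the column `{u} × H`, which avoids `A × B`,
to the row of the target; that row either avoids `A × B` or meets it in `A × {y}`, and then the
isometry of `G − A` supplies a path of length `d_G(u, v)` inside `(G − A) × {y}`. If `u ∈ A`,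
then `x ∉ B` and the same argument applies with the factors swapped.
-/

namespace SimpleGraph

section

variable {V W : Type*} {G : SimpleGraph V} {G' : SimpleGraph W}

lemma Hom.edist_le (f : G →g G') (u v : V) : G'.edist (f u) (f v) ≤ G.edist u v :=
  le_sInf <| Set.forall_mem_range.2 fun w => by simpa using (w.map f).edist_le

lemma edist_le_edist_induce (S : Set V) (u v : S) : G.edist u v ≤ (G.induce S).edist u v :=
  (Embedding.induce S).toHom.edist_le u v

lemma Iso.edist_eq (e : G ≃g G') (u v : V) : G'.edist (e u) (e v) = G.edist u v :=
  le_antisymm (e.toHom.edist_le u v) <| by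
    simpa using e.symm.toHom.edist_le (e u) (e v)

def Hom.codRestrict (f : G →g G') {S : Set W} (h : ∀ v, f v ∈ S) : G →g G'.induce S where
  toFun v := ⟨f v, h v⟩
  map_rel' := f.map_rel'

end

variable {G : SimpleGraph α} {H : SimpleGraph β}

lemma edist_induce_row_le {T : Set (α × β)} {y : β} {p q : T}
    (w : ((G □ H).induce T).Walk p q) (hp : p.1.2 = y) (hq : q.1.2 = y)
    (hw : w.length ≤ G.edist p.1.1 q.1.1) :
    (G.induce {u | (u, y) ∈ T}).edist ⟨p.1.1, hp ▸ p.2⟩ ⟨q.1.1, hq ▸ q.2⟩ ≤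
      w.length := by
  induction w with
  | nil => simp
  | @cons p r q h w ih =>
    rw [Walk.length_cons, Nat.cast_add, Nat.cast_one] at hw ⊢
    rcases boxProd_adj.1 (induce_adj.1 h) with ⟨hG, hpr⟩ | ⟨hH, hpr⟩
    · have hr : r.1.2 = y := hpr ▸ hp
      have hwr : (w.length : ℕ∞) ≤ G.edist r.1.1 q.1.1 := by
        have := hw.trans (G.edist_triangle (v := r.1.1))
        rwa [edist_eq_one_iff_adj.2 hG, add_comm 1,
          ENat.add_le_add_iff_right ENat.one_ne_top] at this
      calc _ ≤ (G.induce {u | (u, y) ∈ T}).edist ⟨p.1.1, hp ▸ p.2⟩ ⟨r.1.1, hr ▸ r.2⟩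
            + (G.induce {u | (u, y) ∈ T}).edist ⟨r.1.1, hr ▸ r.2⟩ ⟨q.1.1, hq ▸ q.2⟩ :=
          (G.induce _).edist_triangle
        _ ≤ _ := by
          rw [edist_eq_one_iff_adj.2 (induce_adj.2 hG), add_comm 1]
          exact add_le_add_left (ih hr hq hwr) 1
    · -- a step inside a column leaves the first coordinate, hence its `G`-distance, unchanged
      have : G.edist r.1.1 q.1.1 ≤ w.length :=
        calc G.edist r.1.1 q.1.1 ≤ (G □ H).edist r q := by
              rw [edist_boxProd]; exact le_self_add
          _ ≤ _ := edist_le_edist_induce T r q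
          _ ≤ w.length := w.edist_le
      rw [hpr] at hw
      exact absurd (hw.trans this) (by norm_cast; omega)

end SimpleGraph

lemma IsometricSet.of_iso {V W : Type*} {G : SimpleGraph V} {G' : SimpleGraph W} (e : G ≃g G')
    {S : Set V} {S' : Set W} (h : Set.BijOn e S S') (hS' : IsometricSet G' S') :
    IsometricSet G S := fun a b => by
  rw [← (e.induce h).edist_eq, ← e.edist_eq]
  exact hS' _ _

lemma bijOn_boxProdComm_compl_prod (G : SimpleGraph α) (H : SimpleGraph β) (A : Set α)
    (B : Set β) : Set.BijOn (boxProdComm G H) (A ×ˢ B)ᶜ (B ×ˢ A)ᶜ := by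
  refine (boxProdComm G H).toEquiv.image_eq_iff_bijOn.1 ?_
  rw [Set.image_compl_eq (boxProdComm G H).toEquiv.bijective]
  ext ⟨b, a⟩
  simp [and_comm]

section

variable {G : SimpleGraph α} {H : SimpleGraph β} {A : Set α} {B : Set β}

lemma IsometricSet.of_boxProd_compl_prod (hC : IsometricSet (G □ H) (A ×ˢ B)ᶜ)
    (hB : B.Nonempty) : IsometricSet G Aᶜ := by
  intro a b
  refine le_antisymm ?_ (edist_le_edist_induce _ a b)
  obtain ⟨y, hy⟩ := hB
  let p : ↥(A ×ˢ B)ᶜ := ⟨(a.1, y), fun h => a.2 h.1⟩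
  let q : ↥(A ×ˢ B)ᶜ := ⟨(b.1, y), fun h => b.2 h.1⟩
  have hpq : ((G □ H).induce (A ×ˢ B)ᶜ).edist p q = G.edist a b := by
    rw [hC, edist_boxProd]
    simp [p, q]
  obtain hab | hab := eq_or_ne (G.edist a b) ⊤
  · exact hab ▸ le_top
  obtain ⟨w, hw⟩ := exists_walk_of_edist_ne_top (hpq ▸ hab)
  have hrow : {u | (u, y) ∈ (A ×ˢ B)ᶜ} ⊆ Aᶜ := fun u hu hA => hu ⟨hA, hy⟩
  calc (G.induce Aᶜ).edist a b
        ≤ (G.induce {u | (u, y) ∈ (A ×ˢ B)ᶜ}).edist ⟨a, p.2⟩ ⟨b, q.2⟩ :=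
          (G.induceHomOfLE hrow).toHom.edist_le _ _
    _ ≤ w.length := edist_induce_row_le w rfl rfl (by rw [hw, hpq])
    _ = G.edist a b := hw.trans hpq

lemma edist_induce_boxProd_compl_prod_le (hA : IsometricSet G Aᶜ) (p q : ↥(A ×ˢ B)ᶜ)
    (hp : p.1.1 ∉ A) : ((G □ H).induce (A ×ˢ B)ᶜ).edist p q ≤ (G □ H).edist p q := by
  obtain ⟨⟨u, x⟩, hp'⟩ := p
  obtain ⟨⟨v, y⟩, hq⟩ := q
  let m : ↥(A ×ˢ B)ᶜ := ⟨(u, y), fun h => hp h.1⟩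
  have hcol : ((G □ H).induce (A ×ˢ B)ᶜ).edist ⟨(u, x), hp'⟩ m ≤ H.edist x y :=
    ((G.boxProdRight H u).toHom.codRestrict (S := (A ×ˢ B)ᶜ) fun _ h => hp h.1).edist_le x y
  have hrow : ((G □ H).induce (A ×ˢ B)ᶜ).edist m ⟨(v, y), hq⟩ ≤ G.edist u v := by
    by_cases hy : y ∈ B
    · have hv : v ∉ A := fun hv => hq ⟨hv, hy⟩
      have hrowA : Set.MapsTo (G.boxProdLeft H y) Aᶜ (A ×ˢ B)ᶜ := fun _ hu h => hu h.1
      calc _ ≤ (G.induce Aᶜ).edist ⟨u, hp⟩ ⟨v, hv⟩ :=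
            (induceHom (G.boxProdLeft H y).toHom hrowA).edist_le _ _
        _ = G.edist u v := hA _ _
    · exact ((G.boxProdLeft H y).toHom.codRestrict (S := (A ×ˢ B)ᶜ)
        fun _ h => hy h.2).edist_le u v
  calc _ ≤ _ := SimpleGraph.edist_triangle
    _ ≤ H.edist x y + G.edist u v := add_le_add hcol hrow
    _ = _ := by rw [edist_boxProd, add_comm]

lemma IsometricSet.boxProd_compl_prod (hA : IsometricSet G Aᶜ) (hB : IsometricSet H Bᶜ) :
    IsometricSet (G □ H) (A ×ˢ B)ᶜ := by
  intro p q
  refine le_antisymm ?_ (edist_le_edist_induce _ p q)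
  by_cases hpA : p.1.1 ∈ A
  · have he := bijOn_boxProdComm_compl_prod G H A B
    rw [← ((boxProdComm G H).induce he).edist_eq, ← (boxProdComm G H).edist_eq]
    exact edist_induce_boxProd_compl_prod_le hB _ _ fun hpB => p.2 ⟨hpA, hpB⟩
  · exact edist_induce_boxProd_compl_prod_le hA p q hpA

end

theorem stmt_9 (G : SimpleGraph α) (H : SimpleGraph β)
    (A : Set α) (B : Set β) (hA : A.Nonempty) (hB : B.Nonempty) :
    IsometricSet (G □ H) ((A ×ˢ B)ᶜ) ↔
      IsometricSet G Aᶜ ∧ IsometricSet H Bᶜ :=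
  ⟨fun h => ⟨h.of_boxProd_compl_prod hB,
      (h.of_iso (boxProdComm H G) (bijOn_boxProdComm_compl_prod H G B A)).of_boxProd_compl_prod
        hA⟩,
    fun h => h.1.boxProd_compl_prod h.2⟩
end

section
/- If G □ H is sequentially distance preserving, then G is sequentially distance preserving; moreover, for any fixed vertex x of H and any sdp sequence of G □ H, the subsequence of vertices of the form (u_i, x) projects to an sdp sequence u_1,...,u_n of G. -/
open SimpleGraph

variable {α β : Type*}

/-!
Deleting the first `s` entries of the projected sequence leaves exactly the vertices `u` of `G`
for which `(u, x)` survives the deletion of some prefix of the sdp sequence of `G □ H`. So it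
suffices that the `x`-layer `{u | (u, x) ∈ S}` of an isometric set `S` of `G □ H` is isometric in
`G`: a shortest path of `G □ H` inside `S` from `(a, x)` to `(b, x)` has length `d_G(a, b)`, hence
makes no move in the direction of `H` and stays in the layer.
-/

namespace SimpleGraph

variable {G : SimpleGraph α} {H : SimpleGraph β}

theorem edist_le_induce_edist (S : Set α) (a b : S) :
    G.edist a b ≤ (G.induce S).edist a b := by
  rcases eq_or_ne ((G.induce S).edist a b) ⊤ with h | h
  · simp [h]
  · obtain ⟨p, hp⟩ := exists_walk_of_edist_ne_top h
    calc G.edist a b ≤ (p.map (Embedding.induce S).toHom).length := edist_le _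
      _ = (G.induce S).edist a b := by rw [Walk.length_map, hp]

/-- Passing through `v` costs at least `G.edist a b + 2 * H.edist x v.2`, by `edist_boxProd`. -/
theorem Walk.snd_eq_of_length_le_edist {a b : α} {x : β} (w : (G □ H).Walk (a, x) (b, x))
    (hw : (w.length : ℕ∞) ≤ G.edist a b) : ∀ v ∈ w.support, v.2 = x := by
  classical
  intro v hv
  have hfin : G.edist a b ≠ ⊤ := by
    have := edist_le w
    rw [edist_boxProd, edist_self, add_zero] at this
    exact ne_top_of_le_ne_top (ENat.natCast_ne_top _) this
  have hsplit : (G □ H).edist (a, x) v + (G □ H).edist v (b, x) ≤ w.length := by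
    rw [← w.take_spec hv, Walk.length_append, Nat.cast_add]
    exact add_le_add (edist_le _) (edist_le _)
  have hcost : G.edist a b + H.edist x v.2 ≤ G.edist a b + 0 :=
    calc G.edist a b + H.edist x v.2
        ≤ (G.edist a v.1 + G.edist v.1 b) + (H.edist x v.2 + H.edist v.2 x) :=
          add_le_add SimpleGraph.edist_triangle le_self_add
      _ = (G □ H).edist (a, x) v + (G □ H).edist v (b, x) := by
          simp only [edist_boxProd]; ring
      _ ≤ G.edist a b + 0 := by rw [add_zero]; exact hsplit.trans hw
  exact (edist_eq_zero_iff.mp (nonpos_iff_eq_zero.mp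
    ((ENat.add_le_add_iff_left hfin).mp hcost))).symm

@[simp]
theorem Walk.length_induce {s : Set α} {u v : α} (w : G.Walk u v) (hw : ∀ x ∈ w.support, x ∈ s) :
    (w.induce s hw).length = w.length := by
  induction w with
  | nil => rfl
  | cons _ _ ih => simp [ih]

def boxProdLayerHom (S : Set (α × β)) (x : β) :
    (G □ H).induce {p | p ∈ S ∧ p.2 = x} →g G.induce {u | (u, x) ∈ S} where
  toFun p := ⟨p.1.1, by obtain ⟨⟨u, y⟩, hS, rfl⟩ := p; exact hS⟩
  map_rel' {p q} h := by
    rcases boxProd_adj.mp h with ⟨hG, -⟩ | ⟨hH, -⟩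
    · exact hG
    · change H.Adj p.1.2 q.1.2 at hH
      rw [p.2.2, q.2.2] at hH
      exact absurd hH H.irrefl

theorem IsometricSet.exists_walk_length_eq_edist {S : Set α} (hS : IsometricSet G S) {a b : α}
    (ha : a ∈ S) (hb : b ∈ S) (hab : G.edist a b ≠ ⊤) :
    ∃ w : G.Walk a b, (∀ v ∈ w.support, v ∈ S) ∧ (w.length : ℕ∞) = G.edist a b := by
  have hd : (G.induce S).edist ⟨a, ha⟩ ⟨b, hb⟩ = G.edist a b := hS ⟨a, ha⟩ ⟨b, hb⟩
  obtain ⟨W, hW⟩ := exists_walk_of_edist_ne_top (hd ▸ hab)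
  have hlen : ((W.map (Embedding.induce S).toHom).length : ℕ∞) = G.edist a b := by
    rw [Walk.length_map, hW, hd]
  have hsupp : ∀ v ∈ (W.map (Embedding.induce S).toHom).support, v ∈ S := by
    intro v hv
    rw [Walk.support_map, List.mem_map] at hv
    obtain ⟨y, -, rfl⟩ := hv
    exact y.2
  exact ⟨_, hsupp, hlen⟩

theorem IsometricSet.boxProd_layer {S : Set (α × β)} (hS : IsometricSet (G □ H) S) (x : β) :
    IsometricSet G {u | (u, x) ∈ S} := by
  rintro ⟨a, ha⟩ ⟨b, hb⟩
  refine le_antisymm ?_ (edist_le_induce_edist _ _ _)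
  rcases eq_or_ne (G.edist a b) ⊤ with h | h
  · exact h ▸ le_top
  have hlayer : (G □ H).edist (a, x) (b, x) = G.edist a b := by
    rw [edist_boxProd, edist_self, add_zero]
  obtain ⟨w, hwS, hwlen⟩ := hS.exists_walk_length_eq_edist ha hb (hlayer ▸ h)
  rw [hlayer] at hwlen
  have hwx : ∀ v ∈ w.support, v.2 = x := w.snd_eq_of_length_le_edist hwlen.le
  let w' := (w.induce {p | p ∈ S ∧ p.2 = x} fun v hv => ⟨hwS v hv, hwx v hv⟩).map
    (boxProdLayerHom S x)
  calc (G.induce _).edist ⟨a, ha⟩ ⟨b, hb⟩ ≤ w'.length := edist_le w'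
    _ = G.edist a b := by rw [Walk.length_map, Walk.length_induce, hwlen]

end SimpleGraph

namespace List

theorem exists_filter_take_eq_take_filter {γ : Type*} (p : γ → Bool) :
    ∀ (l : List γ) (s : ℕ), ∃ t, (l.take t).filter p = (l.filter p).take s
  | [], _ => ⟨0, by simp⟩
  | _ :: _, 0 => ⟨0, by simp⟩
  | a :: l, s + 1 => by
    by_cases ha : p a
    · obtain ⟨t, ht⟩ := exists_filter_take_eq_take_filter p l s
      exact ⟨t + 1, by simp [ha, ht]⟩
    · obtain ⟨t, ht⟩ := exists_filter_take_eq_take_filter p l (s + 1)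
      exact ⟨t + 1, by simp [ha, ht]⟩

variable [DecidableEq β] {l : List (α × β)} {x : β}

theorem mem_map_fst_filter_snd_eq {u : α} :
    u ∈ (l.filter fun p => decide (p.2 = x)).map Prod.fst ↔ (u, x) ∈ l := by
  simp

theorem Nodup.map_fst_filter_snd_eq (hl : l.Nodup) :
    ((l.filter fun p => decide (p.2 = x)).map Prod.fst).Nodup := by
  refine (hl.filter _).map_on fun p hp q hq hpq => Prod.ext hpq ?_
  simp only [mem_filter, decide_eq_true_eq] at hp hq
  rw [hp.2, hq.2]

end List

theorem stmt_11 (G : SimpleGraph α) (H : SimpleGraph β)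
    [Fintype α] [Fintype β] [DecidableEq β]
    (hconn : (G □ H).Connected)
    (L : List (α × β)) (hL : IsSdpList (G □ H) L) (x : β) :
    G.Connected ∧
      IsSdpList G ((L.filter (fun p => decide (p.2 = x))).map Prod.fst) := by
  obtain ⟨hnd, hmem, hiso⟩ := hL
  refine ⟨hconn.ofBoxProdLeft, hnd.map_fst_filter_snd_eq,
    fun u => List.mem_map_fst_filter_snd_eq.mpr (hmem _), fun s => ?_⟩
  obtain ⟨t, ht⟩ := L.exists_filter_take_eq_take_filter (fun p => decide (p.2 = x)) s
  have hremaining : {u | u ∉ ((L.filter fun p => decide (p.2 = x)).map Prod.fst).take s} =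
      {u | (u, x) ∈ {p | p ∉ L.take t}} := by
    ext u
    simp only [Set.mem_ofPred_eq, ← List.map_take, ← ht, List.mem_map_fst_filter_snd_eq]
  rw [hremaining]
  exact (hiso t).boxProd_layer x
end
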